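/- Let L, P > 0, d_R ≥ 1, d_F ≥ 0 integers, and let v : [0,T] → ℝ_{>0} be continuous with infimum V_L > 0. Define for an admissible discretization δ the cost C(δ;v) = Σ_{k=0}^{n−1} 4 v(t_k) h_{k+1}^{d_F} σ(h_{k+1},ρ_k) / (ρ_k^{d_R} min(ρ_k,ρ_{k+1})^{d_F+1}), with σ(h,ρ) = (ρ/4)(1+Lh)((1+Lh)/(1−Lh)+6). Then there is c > 0, depending only on L, P, d_R, d_F, V_L, such that for all admissible δ, subdividing at the index k of minimal ρ increases the cost by at least c (min_i ρ_i)^{−d_R − d_F/2}: C(ψ[δ;k];v) − C(δ;v) ≥ c (min_i ρ_i)^{−d_R−d_F/2} > 0. -/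

import Mathlib

/-! For `L h ≤ 1/4` the ratio `σ(h, ρ) / ρ` lies between `7/4` and `3`. Hence subdividing at
the index `k` of minimal `ρ` does not decrease any old term of the cost: halving a step while
quartering the following mesh value, or quartering a minimal mesh value, only enlarges the
quotient. For `k = 0` the one changed term is multiplied by `4 ^ (d_R + d_F) ≥ 2`; for `k ≥ 1` a
new term appears, with both mesh values `ρ_k / 4` and step `h` satisfying `ρ_k / 4 = 2 L P h²`.
Either way the gain is at least `7 V_L h ^ d_F / ρ ^ (d_R + d_F)` for some `ρ ≤ 2 L P h²` with
`ρ ≤ ρ_k`, and the coupling turns `h ^ d_F` into `(ρ / 2 L P) ^ (d_F / 2)`. -/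

noncomputable def sigmaFun (L h ρ : ℝ) : ℝ := (ρ/4) * (1 + L*h) * ((1 + L*h)/(1 - L*h) + 6)

/-- temporal nodes: t_k = h_1 + ... + h_k (0-based steps). -/
noncomputable def tnode (h : ℕ → ℝ) (k : ℕ) : ℝ := ∑ j ∈ Finset.range k, h j

/-- The cost estimator C(δ;v) = Σ_{k=0}^{n−1} 4 v(t_k) h_{k+1}^{d_F} σ(h_{k+1},ρ_k)
/ (ρ_k^{d_R} min(ρ_k,ρ_{k+1})^{d_F+1}); here h k stands for h_{k+1}. -/
noncomputable def costC (L : ℝ) (dR dF : ℕ) (v : ℝ → ℝ) (n : ℕ) (h ρ : ℕ → ℝ) : ℝ :=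
  ∑ k ∈ Finset.range n,
    4 * v (tnode h k) * (h k)^dF * sigmaFun L (h k) (ρ k) /
      ((ρ k)^dR * (min (ρ k) (ρ (k+1)))^(dF+1))

/-- step sizes after halving the step with 0-based index i₀. -/
noncomputable def subh (h : ℕ → ℝ) (i₀ : ℕ) : ℕ → ℝ := fun i =>
  if i < i₀ then h i else if i ≤ i₀ + 1 then h i₀ / 2 else h (i-1)

/-- mesh sizes after quartering ρ_j into two copies (j ≥ 1). -/
noncomputable def subρ (ρ : ℕ → ℝ) (j : ℕ) : ℕ → ℝ := fun k =>
  if k < j then ρ k else if k ≤ j + 1 then ρ j / 4 else ρ (k-1)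

/-- mesh sizes after quartering only ρ₀ (subdivision index j = 0). -/
noncomputable def subρ0 (ρ : ℕ → ℝ) : ℕ → ℝ := fun k => if k = 0 then ρ 0 / 4 else ρ k

/-- cost of the discretization subdivided at index j. -/
noncomputable def costCsub (L : ℝ) (dR dF : ℕ) (v : ℝ → ℝ) (n : ℕ) (h ρ : ℕ → ℝ)
    (j : ℕ) : ℝ :=
  if j = 0 then costC L dR dF v n h (subρ0 ρ)
  else costC L dR dF v (n+1) (subh h (j-1)) (subρ ρ j)

open Finset

section SigmaFun

variable {L h ρ : ℝ}

lemma seven_le_sigma_factor {x : ℝ} (hx₀ : 0 ≤ x) (hx : x ≤ 1 / 4) :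
    7 ≤ (1 + x) * ((1 + x) / (1 - x) + 6) := by
  have hq : 1 ≤ (1 + x) / (1 - x) := by rw [le_div_iff₀ (by linarith)]; linarith
  nlinarith

lemma sigma_factor_le_twelve {x : ℝ} (hx₀ : 0 ≤ x) (hx : x ≤ 1 / 4) :
    (1 + x) * ((1 + x) / (1 - x) + 6) ≤ 12 := by
  have hq : (1 + x) / (1 - x) ≤ 5 / 3 := by rw [div_le_iff₀ (by linarith)]; linarith
  have hq₀ : 0 ≤ (1 + x) / (1 - x) := div_nonneg (by linarith) (by linarith)
  nlinarith

lemma seven_fourths_mul_le_sigmaFun (hL : 0 ≤ L) (hh : 0 ≤ h) (hLh : L * h ≤ 1 / 4)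
    (hρ : 0 ≤ ρ) : 7 / 4 * ρ ≤ sigmaFun L h ρ := by
  have := seven_le_sigma_factor (mul_nonneg hL hh) hLh
  rw [sigmaFun, mul_assoc]
  nlinarith

lemma sigmaFun_le_three_mul (hL : 0 ≤ L) (hh : 0 ≤ h) (hLh : L * h ≤ 1 / 4)
    (hρ : 0 ≤ ρ) : sigmaFun L h ρ ≤ 3 * ρ := by
  have := sigma_factor_le_twelve (mul_nonneg hL hh) hLh
  rw [sigmaFun, mul_assoc]
  nlinarith

lemma sigmaFun_nonneg (hL : 0 ≤ L) (hh : 0 ≤ h) (hLh : L * h ≤ 1 / 4) (hρ : 0 ≤ ρ) :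
    0 ≤ sigmaFun L h ρ := by
  linarith [seven_fourths_mul_le_sigmaFun hL hh hLh hρ]

lemma sigmaFun_div_four (L h ρ : ℝ) : sigmaFun L h (ρ / 4) = sigmaFun L h ρ / 4 := by
  unfold sigmaFun; ring

lemma sigmaFun_le_four_mul_sigmaFun_half (hL : 0 ≤ L) (hh : 0 ≤ h) (hLh : L * h ≤ 1 / 4)
    (hρ : 0 ≤ ρ) : sigmaFun L h ρ ≤ 4 * sigmaFun L (h / 2) ρ := by
  have := sigmaFun_le_three_mul hL hh hLh hρ
  have := seven_fourths_mul_le_sigmaFun hL (by positivity : 0 ≤ h / 2) (by linarith) hρ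
  linarith

end SigmaFun

noncomputable def costTerm (L : ℝ) (dR dF : ℕ) (V h ρ ρ' : ℝ) : ℝ :=
  4 * V * h ^ dF * sigmaFun L h ρ / (ρ ^ dR * min ρ ρ' ^ (dF + 1))

lemma costC_eq_sum_costTerm (L : ℝ) (dR dF : ℕ) (v : ℝ → ℝ) (n : ℕ) (h ρ : ℕ → ℝ) :
    costC L dR dF v n h ρ =
      ∑ k ∈ range n, costTerm L dR dF (v (tnode h k)) (h k) (ρ k) (ρ (k + 1)) := rfl

lemma pow_div_pow_ge_of_le_mul_sq {a ρ h : ℝ} (k m : ℕ) (ha : 0 < a) (hρ : 0 < ρ)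
    (hh : 0 ≤ h) (hρh : ρ ≤ a * h ^ 2) :
    a ^ (-(m : ℝ) / 2) * ρ ^ (-(k : ℝ) - m / 2) ≤ h ^ m / ρ ^ (k + m) := by
  have hsq : (ρ / a) ^ ((m : ℝ) / 2) ≤ h ^ m := by
    calc (ρ / a) ^ ((m : ℝ) / 2) ≤ (h ^ 2) ^ ((m : ℝ) / 2) :=
          Real.rpow_le_rpow (by positivity) (by rwa [div_le_iff₀' ha]) (by positivity)
      _ = h ^ m := by
          rw [← Real.rpow_natCast h 2, ← Real.rpow_mul hh, ← Real.rpow_natCast h m]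
          congr 1; push_cast; ring
  calc a ^ (-(m : ℝ) / 2) * ρ ^ (-(k : ℝ) - m / 2)
      = (ρ / a) ^ ((m : ℝ) / 2) / ρ ^ (k + m) := by
        rw [Real.div_rpow hρ.le ha.le, div_right_comm, ← Real.rpow_natCast ρ (k + m),
          ← Real.rpow_sub hρ, neg_div, Real.rpow_neg ha.le, div_eq_mul_inv, mul_comm]
        congr 2; push_cast; ring
    _ ≤ h ^ m / ρ ^ (k + m) := by gcongr

section CostTerm

variable {L V h ρ ρ' : ℝ} {dR dF : ℕ}

lemma costTerm_of_le (hρρ' : ρ ≤ ρ') :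
    costTerm L dR dF V h ρ ρ' = 4 * V * h ^ dF * sigmaFun L h ρ / ρ ^ (dR + dF + 1) := by
  rw [costTerm, min_eq_left hρρ', ← pow_add, add_assoc]

lemma costTerm_nonneg (hV : 0 ≤ V) (hL : 0 ≤ L) (hh : 0 ≤ h) (hLh : L * h ≤ 1 / 4)
    (hρ : 0 ≤ ρ) (hρ' : 0 ≤ ρ') : 0 ≤ costTerm L dR dF V h ρ ρ' := by
  have := sigmaFun_nonneg hL hh hLh hρ
  have : 0 ≤ min ρ ρ' := le_min hρ hρ'
  unfold costTerm
  positivity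

lemma costTerm_div_four (hρ : 0 ≤ ρ) (hρρ' : ρ ≤ ρ') :
    costTerm L dR dF V h (ρ / 4) ρ' = 4 ^ (dR + dF) * costTerm L dR dF V h ρ ρ' := by
  rw [costTerm_of_le (by linarith), costTerm_of_le hρρ', sigmaFun_div_four, div_pow,
    div_div_eq_mul_div, pow_succ]
  ring

lemma costTerm_le_costTerm_half_div_four (hV : 0 ≤ V) (hL : 0 ≤ L) (hh : 0 ≤ h)
    (hLh : L * h ≤ 1 / 4) (hρ' : 0 < ρ') (hρ'ρ : ρ' ≤ ρ) :
    costTerm L dR dF V h ρ ρ' ≤ costTerm L dR dF V (h / 2) ρ (ρ' / 4) := by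
  have hρ : 0 < ρ := hρ'.trans_le hρ'ρ
  have hσ := sigmaFun_le_four_mul_sigmaFun_half hL hh hLh hρ.le
  have hscale : (h / 2) ^ dF * 4 ^ (dF + 1) = h ^ dF * (4 * 2 ^ dF) := by
    rw [div_pow, pow_succ, show (4 : ℝ) = 2 * 2 by norm_num, mul_pow]
    field_simp
  have h2 : (1 : ℝ) ≤ 2 ^ dF := one_le_pow₀ (by norm_num)
  have hden : ρ ^ dR * (ρ' / 4) ^ (dF + 1) = ρ ^ dR * ρ' ^ (dF + 1) / 4 ^ (dF + 1) := by
    rw [div_pow, mul_div_assoc]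
  rw [costTerm, costTerm, min_eq_right hρ'ρ, min_eq_right (by linarith), hden,
    div_div_eq_mul_div]
  refine div_le_div_of_nonneg_right ?_ (by positivity)
  calc 4 * V * h ^ dF * sigmaFun L h ρ
      ≤ 4 * V * h ^ dF * (4 * 2 ^ dF * sigmaFun L (h / 2) ρ) := by
        gcongr
        nlinarith [sigmaFun_nonneg hL (by positivity : 0 ≤ h / 2) (by linarith) hρ.le]
    _ = 4 * V * (h / 2) ^ dF * sigmaFun L (h / 2) ρ * 4 ^ (dF + 1) := by
        linear_combination -(4 * V * sigmaFun L (h / 2) ρ) * hscale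

lemma rpow_le_costTerm {a : ℝ} (hV : 0 ≤ V) (hL : 0 ≤ L) (hh : 0 ≤ h) (hLh : L * h ≤ 1 / 4)
    (ha : 0 < a) (hρ : 0 < ρ) (hρρ' : ρ ≤ ρ') (hρh : ρ ≤ a * h ^ 2) :
    7 * V * a ^ (-(dF : ℝ) / 2) * ρ ^ (-(dR : ℝ) - dF / 2) ≤ costTerm L dR dF V h ρ ρ' := by
  have hσ := seven_fourths_mul_le_sigmaFun hL hh hLh hρ.le
  calc 7 * V * a ^ (-(dF : ℝ) / 2) * ρ ^ (-(dR : ℝ) - dF / 2)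
      ≤ 7 * V * (h ^ dF / ρ ^ (dR + dF)) := by
        rw [mul_assoc (7 * V)]
        gcongr
        exact pow_div_pow_ge_of_le_mul_sq dR dF ha hρ hh hρh
    _ = 4 * V * h ^ dF * (7 / 4 * ρ) / ρ ^ (dR + dF + 1) := by
        rw [pow_succ]; field_simp
    _ ≤ costTerm L dR dF V h ρ ρ' := by
        rw [costTerm_of_le hρρ']
        gcongr

end CostTerm

def succAboveNat (p m : ℕ) : ℕ := if m < p then m else m + 1

lemma sum_range_succ_eq_add_sum_succAboveNat {M : Type*} [AddCommMonoid M] (f : ℕ → M)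
    {p n : ℕ} (hp : p ≤ n) :
    ∑ m ∈ range (n + 1), f m = f p + ∑ m ∈ range n, f (succAboveNat p m) := by
  rw [sum_range, sum_range, Fin.sum_univ_succAbove _ ⟨p, Nat.lt_succ_of_le hp⟩]
  congr 1
  refine Fintype.sum_congr _ _ fun m => ?_
  simp only [Fin.succAbove, Fin.lt_def, Fin.val_castSucc, succAboveNat]
  split_ifs <;> rfl

section Subdivision

variable (h ρ : ℕ → ℝ) (i : ℕ)

lemma subh_succAboveNat (m : ℕ) :
    subh h i (succAboveNat (i + 1) m) = if m = i then h i / 2 else h m := by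
  unfold subh succAboveNat
  split_ifs <;> first | rfl | omega

lemma subρ_succAboveNat (m : ℕ) :
    subρ ρ (i + 1) (succAboveNat (i + 1) m) = if m = i + 1 then ρ (i + 1) / 4 else ρ m := by
  unfold subρ succAboveNat
  split_ifs <;> first | rfl | omega

lemma subρ_succAboveNat_succ (m : ℕ) :
    subρ ρ (i + 1) (succAboveNat (i + 1) m + 1) = if m = i then ρ (i + 1) / 4 else ρ (m + 1) := by
  unfold subρ succAboveNat
  split_ifs <;> first | rfl | omega

lemma subh_succ : subh h i (i + 1) = h i / 2 := by
  rw [subh, if_neg (by omega), if_pos le_rfl]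

lemma tnode_subh_succAboveNat (m : ℕ) :
    tnode (subh h i) (succAboveNat (i + 1) m) = tnode h m := by
  rcases lt_or_ge m (i + 1) with hm | hm
  · rw [succAboveNat, if_pos hm]
    refine sum_congr rfl fun j hj => ?_
    rw [subh, if_pos (by simp at hj; omega)]
  · rw [succAboveNat, if_neg (by omega), tnode, tnode,
      sum_range_succ_eq_add_sum_succAboveNat _ hm]
    have hi : i ∈ range m := mem_range.mpr (by omega)
    simp only [subh_succAboveNat]
    rw [← add_sum_erase _ _ hi, ← add_sum_erase _ _ hi, if_pos rfl,
      sum_congr rfl fun j hj => if_neg (ne_of_mem_erase hj), subh_succ]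
    ring

lemma tnode_subh_succ : tnode (subh h i) (i + 1) = tnode h i + h i / 2 := by
  have := tnode_subh_succAboveNat h i i
  rw [succAboveNat, if_pos (Nat.lt_succ_self i)] at this
  rw [tnode, sum_range_succ, ← tnode, this, subh, if_neg (lt_irrefl i), if_pos (by omega)]

end Subdivision

lemma tnode_mem_Icc {h : ℕ → ℝ} {n m : ℕ} {T : ℝ} (hh : ∀ j < n, 0 ≤ h j)
    (hsum : ∑ j ∈ range n, h j = T) (hm : m ≤ n) : tnode h m ∈ Set.Icc 0 T :=
  ⟨sum_nonneg fun j hj => hh j (by simp at hj; omega),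
    hsum ▸ sum_le_sum_of_subset_of_nonneg (range_subset_range.mpr hm)
      fun j hj _ => hh j (mem_range.mp hj)⟩

section CostC

variable {L : ℝ} {dR dF : ℕ} {v : ℝ → ℝ} {n : ℕ} {h ρ : ℕ → ℝ}

lemma costC_subρ0_sub_costC (hn : 1 ≤ n) (hρ₀ : 0 ≤ ρ 0) (hρ₀₁ : ρ 0 ≤ ρ 1) :
    costC L dR dF v n h (subρ0 ρ) - costC L dR dF v n h ρ =
      (4 ^ (dR + dF) - 1) * costTerm L dR dF (v (tnode h 0)) (h 0) (ρ 0) (ρ 1) := by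
  obtain ⟨n, rfl⟩ := Nat.exists_eq_add_of_le' hn
  simp only [costC_eq_sum_costTerm, sum_range_succ', subρ0, Nat.add_one_ne_zero, if_false,
    if_true, zero_add, costTerm_div_four hρ₀ hρ₀₁]
  ring

lemma costC_add_costTerm_le_costC_subdivide {i : ℕ} (hi : i + 1 ≤ n)
    (hv : ∀ m < n, 0 ≤ v (tnode h m)) (hL : 0 ≤ L) (hh : ∀ m < n, 0 ≤ h m)
    (hLh : ∀ m < n, L * h m ≤ 1 / 4) (hρ : ∀ m ≤ n, 0 < ρ m)
    (hmin : ∀ m ≤ n, ρ (i + 1) ≤ ρ m) :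
    costC L dR dF v n h ρ +
        costTerm L dR dF (v (tnode h i + h i / 2)) (h i / 2) (ρ (i + 1) / 4) (ρ (i + 1) / 4) ≤
      costC L dR dF v (n + 1) (subh h i) (subρ ρ (i + 1)) := by
  have hρ_new : subρ ρ (i + 1) (i + 1) = ρ (i + 1) / 4 := by
    rw [subρ, if_neg (lt_irrefl _), if_pos (by omega)]
  have hρ_next : subρ ρ (i + 1) (i + 1 + 1) = ρ (i + 1) / 4 := by
    rw [subρ, if_neg (by omega), if_pos le_rfl]
  rw [costC_eq_sum_costTerm, costC_eq_sum_costTerm,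
    sum_range_succ_eq_add_sum_succAboveNat _ hi, tnode_subh_succ, subh_succ, hρ_new, hρ_next,
    add_comm]
  gcongr with m hm
  rw [mem_range] at hm
  rw [tnode_subh_succAboveNat, subh_succAboveNat, subρ_succAboveNat, subρ_succAboveNat_succ]
  by_cases hmi : m = i
  · subst hmi
    simp only [↓reduceIte, (Nat.succ_ne_self m).symm]
    exact costTerm_le_costTerm_half_div_four (hv m hm) hL (hh m hm) (hLh m hm)
      (hρ (m + 1) hi) (hmin m (by omega))
  by_cases hmi₁ : m = i + 1
  · subst hmi₁
    simp only [↓reduceIte, hmi]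
    rw [costTerm_div_four (hρ (i + 1) hi).le (hmin _ hm)]
    refine le_mul_of_one_le_left (costTerm_nonneg (hv _ hm) hL (hh _ hm) (hLh _ hm)
      (hρ _ hi).le (hρ _ hm).le) (one_le_pow₀ (by norm_num))
  simp only [if_neg hmi, if_neg hmi₁, le_refl]

end CostC

section CostIncrease

variable {L P V_L : ℝ} {dR dF : ℕ} {v : ℝ → ℝ} {n : ℕ} {h ρ : ℕ → ℝ}

theorem le_costCsub_zero_sub_costC (hL : 0 < L) (hP : 0 < P) (hdR : 1 ≤ dR) (hVL : 0 ≤ V_L)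
    (hv : V_L ≤ v (tnode h 0)) (hn : 1 ≤ n) (hh : 0 ≤ h 0) (hLh : L * h 0 ≤ 1 / 4)
    (hρ₀ : 0 < ρ 0) (hρ₀₁ : ρ 0 ≤ ρ 1) (hcoup : ρ 1 = 2 * L * P * h 0 ^ 2) :
    7 * V_L * (2 * L * P) ^ (-(dF : ℝ) / 2) * ρ 0 ^ (-(dR : ℝ) - dF / 2) ≤
      costCsub L dR dF v n h ρ 0 - costC L dR dF v n h ρ := by
  have hterm := rpow_le_costTerm (dR := dR) (dF := dF) (hVL.trans hv) hL.le hh hLh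
    (by positivity) hρ₀ hρ₀₁ (hcoup ▸ hρ₀₁)
  have h4 : (4 : ℝ) ^ 1 ≤ 4 ^ (dR + dF) := pow_le_pow_right₀ (by norm_num) (by omega)
  rw [costCsub, if_pos rfl, costC_subρ0_sub_costC hn hρ₀.le hρ₀₁]
  calc 7 * V_L * (2 * L * P) ^ (-(dF : ℝ) / 2) * ρ 0 ^ (-(dR : ℝ) - dF / 2)
      ≤ 7 * v (tnode h 0) * (2 * L * P) ^ (-(dF : ℝ) / 2) * ρ 0 ^ (-(dR : ℝ) - dF / 2) := by
        gcongr
    _ ≤ costTerm L dR dF (v (tnode h 0)) (h 0) (ρ 0) (ρ 1) := hterm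
    _ ≤ (4 ^ (dR + dF) - 1) * costTerm L dR dF (v (tnode h 0)) (h 0) (ρ 0) (ρ 1) :=
        le_mul_of_one_le_left (le_trans (by have := hVL.trans hv; positivity) hterm)
          (by linarith)

theorem le_costCsub_succ_sub_costC {T : ℝ} {i : ℕ} (hL : 0 < L) (hP : 0 < P) (hVL : 0 ≤ V_L)
    (hv : ∀ t ∈ Set.Icc 0 T, V_L ≤ v t) (hi : i + 1 ≤ n) (hh : ∀ j < n, 0 ≤ h j)
    (hsum : ∑ j ∈ range n, h j = T) (hLh : ∀ j < n, L * h j ≤ 1 / 4)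
    (hρ : ∀ k ≤ n, 0 < ρ k) (hcoup : ρ (i + 1) = 2 * L * P * h i ^ 2)
    (hmin : ∀ k ≤ n, ρ (i + 1) ≤ ρ k) :
    7 * V_L * (2 * L * P) ^ (-(dF : ℝ) / 2) * ρ (i + 1) ^ (-(dR : ℝ) - dF / 2) ≤
      costCsub L dR dF v n h ρ (i + 1) - costC L dR dF v n h ρ := by
  have hnode : ∀ m ≤ n, tnode h m ∈ Set.Icc 0 T := fun m hm => tnode_mem_Icc hh hsum hm
  have hmid : tnode h i + h i / 2 ∈ Set.Icc 0 T := by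
    have hnext : tnode h (i + 1) = tnode h i + h i := sum_range_succ h i
    have := hh i hi
    exact Set.ordConnected_Icc.out (hnode i (by omega)) (hnode (i + 1) hi)
      ⟨by linarith, by linarith⟩
  have hρ₁ := hρ (i + 1) hi
  have hv_mid := hv _ hmid
  have hV_mid := hVL.trans hv_mid
  have hnew := rpow_le_costTerm (dR := dR) (dF := dF) (a := 2 * L * P) (h := h i / 2)
    (ρ := ρ (i + 1) / 4) (ρ' := ρ (i + 1) / 4) hV_mid hL.le
    (by linarith [hh i hi]) (by linarith [hLh i hi])
    (by positivity) (by positivity) le_rfl (le_of_eq (by rw [hcoup]; ring))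
  have hsub := costC_add_costTerm_le_costC_subdivide (L := L) (dR := dR) (dF := dF) hi
    (fun m hm => hVL.trans (hv _ (hnode m hm.le))) hL.le hh hLh hρ hmin
  have hquarter : ρ (i + 1) ^ (-(dR : ℝ) - dF / 2) ≤ (ρ (i + 1) / 4) ^ (-(dR : ℝ) - dF / 2) :=
    Real.rpow_le_rpow_of_nonpos (by positivity) (by linarith)
      (by linarith [(Nat.cast_nonneg dR : (0 : ℝ) ≤ dR), (Nat.cast_nonneg dF : (0 : ℝ) ≤ dF)])
  rw [costCsub, if_neg (Nat.succ_ne_zero i), Nat.add_sub_cancel]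
  calc 7 * V_L * (2 * L * P) ^ (-(dF : ℝ) / 2) * ρ (i + 1) ^ (-(dR : ℝ) - dF / 2)
      ≤ 7 * v (tnode h i + h i / 2) * (2 * L * P) ^ (-(dF : ℝ) / 2) *
          (ρ (i + 1) / 4) ^ (-(dR : ℝ) - dF / 2) := by
        gcongr
    _ ≤ _ := hnew
    _ ≤ _ := by linarith

end CostIncrease

theorem cost_increase_at_min_rho_general (L P T : ℝ) (hL : 0 < L) (hP : 0 < P)
    (dR dF : ℕ) (hdR : 1 ≤ dR) (v : ℝ → ℝ) (V_L : ℝ) (hVL : 0 < V_L)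
    (hv : ∀ t ∈ Set.Icc (0:ℝ) T, V_L ≤ v t) :
    ∃ c > (0:ℝ), ∀ (n : ℕ) (h ρ : ℕ → ℝ), 1 ≤ n →
      (∀ j < n, 0 < h j) → (∑ j ∈ Finset.range n, h j = T) →
      (∀ j < n, h j ≤ 1/(4*L)) →
      (∀ k ≤ n, 0 < ρ k) → (∀ k ≤ n, ρ k ≤ P/(8*L)) →
      (∀ j ≤ n, ∀ k ≤ n, ∃ ℓ : ℤ, ρ j / ρ k = (4:ℝ)^ℓ) →
      (∀ j < n, ρ (j+1) = 2*L*P*(h j)^2) →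
      ∀ k ≤ n, (∀ i ≤ n, ρ k ≤ ρ i) →
        c * (ρ k) ^ (-(dR:ℝ) - (dF:ℝ)/2)
          ≤ costCsub L dR dF v n h ρ k - costC L dR dF v n h ρ := by
  refine ⟨7 * V_L * (2 * L * P) ^ (-(dF : ℝ) / 2), by positivity, ?_⟩
  intro n h ρ hn hh hsum hhL hρ _ _ hcoup k hk hmin
  have hh₀ : ∀ j < n, 0 ≤ h j := fun j hj => (hh j hj).le
  have hLh : ∀ j < n, L * h j ≤ 1 / 4 := fun j hj => by
    have := hhL j hj
    rw [le_div_iff₀ (by positivity)] at this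
    linarith
  rcases k with _ | i
  · exact le_costCsub_zero_sub_costC hL hP hdR hVL.le
      (hv _ (tnode_mem_Icc hh₀ hsum (Nat.zero_le n))) hn (hh₀ 0 hn) (hLh 0 hn)
      (hρ 0 hk) (hmin 1 hn) (hcoup 0 hn)
  · exact le_costCsub_succ_sub_costC hL hP hVL.le hv hk hh₀ hsum hLh hρ (hcoup i hk) hmin

theorem cost_increase_at_min_rho (L P T : ℝ) (hL : 0 < L) (hP : 0 < P) (hT : 0 < T)
    (dR dF : ℕ) (hdR : 1 ≤ dR) (v : ℝ → ℝ) (V_L : ℝ) (hVL : 0 < V_L)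
    (hv : ∀ t ∈ Set.Icc (0:ℝ) T, V_L ≤ v t) :
    ∃ c > (0:ℝ), ∀ (n : ℕ) (h ρ : ℕ → ℝ), 1 ≤ n →
      (∀ j < n, 0 < h j) → (∑ j ∈ Finset.range n, h j = T) →
      (∀ j < n, h j ≤ 1/(4*L)) →
      (∀ k ≤ n, 0 < ρ k) → (∀ k ≤ n, ρ k ≤ P/(8*L)) →
      (∀ j ≤ n, ∀ k ≤ n, ∃ ℓ : ℤ, ρ j / ρ k = (4:ℝ)^ℓ) →
      (∀ j < n, ρ (j+1) = 2*L*P*(h j)^2) →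
      ∀ k ≤ n, (∀ i ≤ n, ρ k ≤ ρ i) →
        c * (ρ k) ^ (-(dR:ℝ) - (dF:ℝ)/2)
          ≤ costCsub L dR dF v n h ρ k - costC L dR dF v n h ρ :=
  cost_increase_at_min_rho_general L P T hL hP dR dF hdR v V_L hVL hv
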